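/- Let Σ be a finite complete simplicial fan in N, σ ∈ Σ with dim σ ≥ 2, and x an element of the relative interior of σ which generates the semigroup (ℝ_{≥0} x) ∩ N. If P ∈ PC(Σ) and G(σ) ⊆ P, then (P ∖ G(σ)) ∪ {x} is a primitive collection of the star subdivision Σ*_{(σ,x)}. -/

import Mathlib

noncomputable section

open Finset

/-- The real vector space `N_ℝ` for the lattice `N = ℤ^d`. -/
abbrev NR (d : ℕ) := Fin d → ℝ

/-- The canonical map from the lattice `N = ℤ^d` to `N_ℝ`. -/
def toNR {d : ℕ} (x : Fin d → ℤ) : NR d := fun i => (x i : ℝ)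

/-- The convex cone generated by a set: all finite nonnegative real combinations. -/
def coneOf {d : ℕ} (S : Set (NR d)) : Set (NR d) :=
  { y | ∃ (n : ℕ) (c : Fin n → ℝ) (v : Fin n → NR d),
      (∀ i, 0 ≤ c i) ∧ (∀ i, v i ∈ S) ∧ y = ∑ i, c i • v i }

/-- `τ` is a face of the cone `σ`, cut out by a linear functional nonnegative on `σ`. -/
def IsFaceOf {d : ℕ} (τ σ : Set (NR d)) : Prop :=
  ∃ u : NR d →ₗ[ℝ] ℝ, (∀ x ∈ σ, 0 ≤ u x) ∧ τ = {x ∈ σ | u x = 0}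

/-- A rational polyhedral cone: generated by finitely many lattice points. -/
def IsRationalPolyhedralCone {d : ℕ} (σ : Set (NR d)) : Prop :=
  ∃ S : Finset (Fin d → ℤ), σ = coneOf (toNR '' (↑S : Set (Fin d → ℤ)))

/-- A pointed (strongly convex) cone. -/
def IsPointedCone {d : ℕ} (σ : Set (NR d)) : Prop :=
  ∀ x ∈ σ, -x ∈ σ → x = 0

/-- A primitive lattice vector. -/
def IsPrimitive {d : ℕ} (x : Fin d → ℤ) : Prop :=
  x ≠ 0 ∧ ∀ (k : ℤ) (y : Fin d → ℤ), x = k • y → k = 1 ∨ k = -1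

/-- The dimension of a cone. -/
def coneDim {d : ℕ} (σ : Set (NR d)) : ℕ :=
  Module.finrank ℝ ↥(Submodule.span ℝ σ)

/-- A (finite) fan in `N = ℤ^d`: a finite collection of rational pointed polyhedral
cones, closed under taking faces, such that the intersection of any two cones is a
face of each. -/
structure Fan (d : ℕ) where
  cones : Set (Set (NR d))
  finite : cones.Finite
  rational : ∀ σ ∈ cones, IsRationalPolyhedralCone σ
  pointed : ∀ σ ∈ cones, IsPointedCone σ
  face_mem : ∀ σ ∈ cones, ∀ τ : Set (NR d), IsFaceOf τ σ → τ ∈ cones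
  inter_face : ∀ σ ∈ cones, ∀ τ ∈ cones, IsFaceOf (σ ∩ τ) σ

namespace Fan

variable {d : ℕ}

/-- A complete fan. -/
def IsComplete (F : Fan d) : Prop := ⋃₀ F.cones = Set.univ

/-- A simplicial fan: every cone is generated by linearly independent vectors. -/
def IsSimplicial (F : Fan d) : Prop :=
  ∀ σ ∈ F.cones, ∃ S : Finset (Fin d → ℤ),
    LinearIndependent ℝ (fun v : ↥(toNR '' (↑S : Set (Fin d → ℤ))) => (v : NR d)) ∧
    σ = coneOf (toNR '' (↑S : Set (Fin d → ℤ)))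

/-- A nonsingular fan: every cone is generated by part of a `ℤ`-basis of `N`. -/
def IsNonsingular (F : Fan d) : Prop :=
  ∀ σ ∈ F.cones, ∃ (b : Module.Basis (Fin d) ℤ (Fin d → ℤ)) (t : Set (Fin d)),
    σ = coneOf (toNR '' (⇑b '' t))

/-- `G(Σ)`: the set of primitive generators of the rays of a fan. -/
def genSet (F : Fan d) : Set (Fin d → ℤ) :=
  { x | IsPrimitive x ∧ coneOf {toNR x} ∈ F.cones }

/-- `G(σ) = σ ∩ G(Σ)`. -/
def coneGens (F : Fan d) (σ : Set (NR d)) : Set (Fin d → ℤ) :=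
  { x ∈ F.genSet | toNR x ∈ σ }

/-- A primitive collection of a fan. -/
def IsPrimitiveCollection (F : Fan d) (P : Finset (Fin d → ℤ)) : Prop :=
  P.Nonempty ∧ (↑P : Set (Fin d → ℤ)) ⊆ F.genSet ∧
    coneOf (toNR '' (↑P : Set (Fin d → ℤ))) ∉ F.cones ∧
    ∀ x ∈ P, coneOf (toNR '' ((↑P : Set (Fin d → ℤ)) \ {x})) ∈ F.cones

/-- `IsPrimRel F P Y a`: `P` is a primitive collection of `F` whose primitive relation is
`∑_{x ∈ P} x = ∑_{y ∈ Y} (a y) • y`, where `Y = G(σ(P))` and `σ(P)` is the unique cone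
whose relative interior contains `∑_{x ∈ P} x`, and the coefficients `a y` are positive. -/
def IsPrimRel (F : Fan d) (P Y : Finset (Fin d → ℤ)) (a : (Fin d → ℤ) → ℤ) : Prop :=
  F.IsPrimitiveCollection P ∧
  ∃ σ ∈ F.cones, (↑Y : Set (Fin d → ℤ)) = F.coneGens σ ∧
    toNR (∑ x ∈ P, x) ∈ intrinsicInterior ℝ σ ∧
    (∀ y ∈ Y, 0 < a y) ∧ (∑ x ∈ P, x) = ∑ y ∈ Y, a y • y

/-- A Fano fan: a finite complete nonsingular fan with `deg P > 0` for every
primitive collection `P` (so its toric variety is a nonsingular toric Fano `d`-fold). -/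
def IsFanoFan (F : Fan d) : Prop :=
  F.IsComplete ∧ F.IsNonsingular ∧
    ∀ P Y a, F.IsPrimRel P Y a → ∑ y ∈ Y, a y < (P.card : ℤ)

/-- The collection of cones of the star subdivision of `F` along `(σ, x)`. -/
def starSub (F : Fan d) (σ : Set (NR d)) (x : Fin d → ℤ) : Set (Set (NR d)) :=
  { τ ∈ F.cones | ¬ IsFaceOf σ τ } ∪
  { ρ | ∃ τ ∈ F.cones, IsFaceOf σ τ ∧ ∃ xi ∈ F.coneGens σ,
      IsFaceOf ρ (coneOf (toNR ''
        (insert x ((F.coneGens τ \ F.coneGens σ) ∪ (F.coneGens σ \ {xi}))))) }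

/-- `F'` is the star subdivision of `F` along `(σ, x)`. -/
def IsStarSubdivisionOf (F' F : Fan d) (σ : Set (NR d)) (x : Fin d → ℤ) : Prop :=
  F'.cones = F.starSub σ x

/-- `F'` is an equivariant blow-up of `F`: the star subdivision along a cone `σ` (with at
least two generators) and the sum of the elements of `G(σ)`. -/
def IsBlowupOf (F' F : Fan d) : Prop :=
  ∃ σ ∈ F.cones, ∃ S : Finset (Fin d → ℤ),
    (↑S : Set (Fin d → ℤ)) = F.coneGens σ ∧ 2 ≤ S.card ∧
    F'.IsStarSubdivisionOf F σ (∑ y ∈ S, y)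

/-- One step of F-equivalence: an equivariant blow-up or blow-down between Fano fans. -/
def FStep (F G : Fan d) : Prop :=
  F.IsFanoFan ∧ G.IsFanoFan ∧ (G.IsBlowupOf F ∨ F.IsBlowupOf G)

/-- F-equivalence of Fano fans. -/
def FEquiv : Fan d → Fan d → Prop := Relation.ReflTransGen FStep

/-- A splitting fan: any two distinct primitive collections are disjoint. -/
def IsSplittingFan (F : Fan d) : Prop :=
  F.IsComplete ∧ F.IsNonsingular ∧
    ∀ P Q, F.IsPrimitiveCollection P → F.IsPrimitiveCollection Q → P ≠ Q →
      ∀ x ∈ P, x ∉ Q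

/-- Data of a wall relation: `τ` is a wall (a `(d-1)`-dimensional cone) with
`G(τ) = Z`, `z_d = zd`, `z_{d+1} = zd1` the generators of the two maximal cones
containing `τ`, and `∑_{z ∈ Z} (b z) • z + zd + zd1 = 0`.  The anticanonical degree of
the corresponding invariant curve is `∑_{z ∈ Z} b z + 2`. -/
def IsWallRel (F : Fan d) (τ : Set (NR d)) (Z : Finset (Fin d → ℤ))
    (zd zd1 : Fin d → ℤ) (b : (Fin d → ℤ) → ℤ) : Prop :=
  τ ∈ F.cones ∧ coneDim τ = d - 1 ∧ (↑Z : Set (Fin d → ℤ)) = F.coneGens τ ∧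
    zd ∈ F.genSet ∧ zd1 ∈ F.genSet ∧ zd ≠ zd1 ∧ zd ∉ Z ∧ zd1 ∉ Z ∧
    coneOf (toNR '' (insert zd (↑Z : Set (Fin d → ℤ)))) ∈ F.cones ∧
    coneOf (toNR '' (insert zd1 (↑Z : Set (Fin d → ℤ)))) ∈ F.cones ∧
    (∑ z ∈ Z, b z • z) + zd + zd1 = 0

end Fan

/-- The fan of a product of projective spaces `P^{a 0} × ⋯ × P^{a (r-1)}`. -/
def IsProdProjFan {d r : ℕ} (F : Fan d) (a : Fin r → ℕ) : Prop :=
  ∃ e : (j : Fin r) → Fin (a j + 1) → (Fin d → ℤ),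
    (∀ j, ∑ i, e j i = 0) ∧
    (∃ b : Module.Basis ((j : Fin r) × Fin (a j)) ℤ (Fin d → ℤ),
       ∀ (j : Fin r) (i : Fin (a j)), e j i.castSucc = b ⟨j, i⟩) ∧
    F.cones = { σ | ∃ s : (j : Fin r) → Finset (Fin (a j + 1)),
        (∀ j, s j ≠ Finset.univ) ∧
        σ = coneOf (toNR '' (⋃ j, (e j) '' (↑(s j) : Set (Fin (a j + 1))))) }

/-- The fan of the projective space `P^d`. -/
def IsProjFan {d : ℕ} (F : Fan d) : Prop := IsProdProjFan F (fun _ : Fin 1 => d)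

/-- The lattice points of `N_ℝ`. -/
def latticePts (d : ℕ) : Set (NR d) := Set.range (toNR (d := d))

/-- `F` is, up to a unimodular identification, the product of the fans `F₁` and `F₂`. -/
def IsProductOf {d d₁ d₂ : ℕ} (F : Fan d) (F₁ : Fan d₁) (F₂ : Fan d₂) : Prop :=
  ∃ φ : NR d ≃ₗ[ℝ] NR d₁ × NR d₂,
    (⇑φ '' latticePts d = (latticePts d₁) ×ˢ (latticePts d₂)) ∧
    F.cones = { σ | ∃ σ₁ ∈ F₁.cones, ∃ σ₂ ∈ F₂.cones, ⇑φ '' σ = σ₁ ×ˢ σ₂ }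

/-- `δ` is a nonempty proper face of the polytope `Δ`. -/
def IsProperPolytopeFace {d : ℕ} (δ Δ : Set (NR d)) : Prop :=
  δ.Nonempty ∧ δ ≠ Δ ∧ ∃ (u : NR d →ₗ[ℝ] ℝ) (c : ℝ),
    (∀ x ∈ Δ, u x ≤ c) ∧ δ = {x ∈ Δ | u x = c}

/-- The collection of cones over the proper faces of the polytope `Conv(V)`
(together with the zero cone). -/
def polytopeFaceFan {d : ℕ} (V : Set (NR d)) : Set (Set (NR d)) :=
  insert ({0} : Set (NR d))
    { σ | ∃ δ : Set (NR d), IsProperPolytopeFace δ (convexHull ℝ V) ∧ σ = coneOf δ }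

/-- The four-dimensional del Pezzo fan `V⁴` (up to unimodular equivalence). -/
def IsDelPezzoFan4 (F : Fan 4) : Prop :=
  ∃ b : Module.Basis (Fin 4) ℤ (Fin 4 → ℤ),
    F.cones = polytopeFaceFan (toNR ''
      ((Set.range ⇑b) ∪ (Set.range fun i => -b i) ∪ {(∑ i, b i), -(∑ i, b i)}))

/-- The four-dimensional pseudo del Pezzo fan `Ṽ⁴` (up to unimodular equivalence). -/
def IsPseudoDelPezzoFan4 (F : Fan 4) : Prop :=
  ∃ b : Module.Basis (Fin 4) ℤ (Fin 4 → ℤ),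
    F.cones = polytopeFaceFan (toNR ''
      ((Set.range ⇑b) ∪ (Set.range fun i => -b i) ∪ {∑ i, b i}))

/-- An equivariant blow-up of a 3-dimensional fan at an invariant point: star subdivision
along a 3-dimensional cone and the sum of its three generators. -/
def PointBlowup3 (F' F : Fan 3) : Prop :=
  ∃ σ ∈ F.cones, ∃ S : Finset (Fin 3 → ℤ),
    (↑S : Set (Fin 3 → ℤ)) = F.coneGens σ ∧ S.card = 3 ∧
    F'.IsStarSubdivisionOf F σ (∑ y ∈ S, y)

/-- An equivariant blow-up of a 3-dimensional fan along an invariant curve: star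
subdivision along a 2-dimensional cone and the sum of its two generators. -/
def CurveBlowup3 (F' F : Fan 3) : Prop :=
  ∃ σ ∈ F.cones, ∃ S : Finset (Fin 3 → ℤ),
    (↑S : Set (Fin 3 → ℤ)) = F.coneGens σ ∧ S.card = 2 ∧
    F'.IsStarSubdivisionOf F σ (∑ y ∈ S, y)


/-!
Write `P' = (P ∖ G(σ)) ∪ {x}`. As `x` lies in the relative interior of the simplicial cone `σ`,
it is a combination of all of `G(σ)` with strictly positive coefficients. Hence replacing any
`g ∈ G(σ)` by `x` in a linearly independent set containing `G(σ)` keeps it linearly independent,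
which makes every cone `σ_i + τ'` of the star subdivision simplicial on the corresponding set.

Removing `x` from `P'` leaves `P ∖ G(σ)`, a face of the cone `Cone(P ∖ {g})` of `Σ` that does not
contain `σ`; removing `y ∈ P ∖ G(σ)` leaves a face of `σ_i + τ'` for `τ = Cone(P ∖ {y}) ⊇ σ`.
Finally `Cone(P')` is not a cone of the subdivision: an old cone containing `x` contains `σ` and
would equal `Cone(P)`, while a new cone lies in some `τ ⊇ σ` of `Σ`, which forces `P ⊆ G(τ)` and
makes `Cone(P)` a face of `τ`.
-/

section StarSubdivision

variable {d : ℕ}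

lemma toNR_injective : Function.Injective (toNR (d := d)) :=
  fun _ _ h => funext fun i => by simpa [toNR] using congrFun h i

@[simp] lemma toNR_zero : toNR (0 : Fin d → ℤ) = 0 :=
  funext fun _ => Int.cast_zero

@[simp] lemma toNR_eq_zero {x : Fin d → ℤ} : toNR x = 0 ↔ x = 0 :=
  toNR_injective.eq_iff' toNR_zero

lemma toNR_zsmul (k : ℤ) (x : Fin d → ℤ) : toNR (k • x) = (k : ℝ) • toNR x := by
  funext i; simp [toNR]

lemma coneOf_eq_hull (S : Set (NR d)) : coneOf S = PointedCone.hull ℝ S := by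
  ext y
  rw [SetLike.mem_coe, Submodule.mem_span_set']
  constructor
  · rintro ⟨n, c, v, hc, hv, rfl⟩
    exact ⟨n, fun i => ⟨c i, hc i⟩, fun i => ⟨v i, hv i⟩, rfl⟩
  · rintro ⟨n, c, v, rfl⟩
    exact ⟨n, fun i => c i, fun i => v i, fun i => (c i).2, fun i => (v i).2, rfl⟩

lemma subset_coneOf (S : Set (NR d)) : S ⊆ coneOf S := by
  rw [coneOf_eq_hull]; exact PointedCone.subset_hull

lemma zero_mem_coneOf (S : Set (NR d)) : (0 : NR d) ∈ coneOf S := by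
  rw [coneOf_eq_hull]; exact zero_mem _

lemma smul_mem_coneOf {S : Set (NR d)} {y : NR d} {t : ℝ} (ht : 0 ≤ t) (hy : y ∈ coneOf S) :
    t • y ∈ coneOf S := by
  rw [coneOf_eq_hull] at hy ⊢; exact Submodule.smul_mem _ (⟨t, ht⟩ : {c : ℝ // 0 ≤ c}) hy

lemma coneOf_subset_coneOf {S T : Set (NR d)} (h : S ⊆ coneOf T) : coneOf S ⊆ coneOf T := by
  simp only [coneOf_eq_hull] at h ⊢; exact Submodule.span_le.2 h

lemma coneOf_mono {S T : Set (NR d)} (h : S ⊆ T) : coneOf S ⊆ coneOf T :=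
  coneOf_subset_coneOf (h.trans (subset_coneOf T))

lemma span_coneOf (S : Set (NR d)) : Submodule.span ℝ (coneOf S) = Submodule.span ℝ S := by
  rw [coneOf_eq_hull]; exact Submodule.span_span_of_tower _ _ _

lemma mem_coneOf_singleton {v y : NR d} : y ∈ coneOf {v} ↔ ∃ c : ℝ, 0 ≤ c ∧ y = c • v := by
  rw [coneOf_eq_hull, SetLike.mem_coe, Submodule.mem_span_singleton]
  exact ⟨fun ⟨c, hc⟩ => ⟨c, c.2, hc.symm⟩, fun ⟨c, hc, hy⟩ => ⟨⟨c, hc⟩, hy.symm⟩⟩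

lemma coneOf_singleton_smul {v : NR d} {t : ℝ} (ht : 0 < t) : coneOf {t • v} = coneOf {v} := by
  refine (coneOf_subset_coneOf ?_).antisymm (coneOf_subset_coneOf ?_) <;>
    rintro w rfl <;> rw [mem_coneOf_singleton]
  · exact ⟨t, ht.le, rfl⟩
  · exact ⟨t⁻¹, inv_nonneg.2 ht.le, by rw [smul_smul, inv_mul_cancel₀ ht.ne', one_smul]⟩

lemma mem_coneOf_image {S : Finset (Fin d → ℤ)} {y : NR d} :
    y ∈ coneOf (toNR '' (↑S : Set (Fin d → ℤ))) ↔
      ∃ c : (Fin d → ℤ) → ℝ, (∀ s ∈ S, 0 ≤ c s) ∧ y = ∑ s ∈ S, c s • toNR s := by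
  rw [coneOf_eq_hull, SetLike.mem_coe]
  constructor
  · rw [← Finset.coe_image, Submodule.mem_span_finset]
    rintro ⟨c, -, rfl⟩
    refine ⟨fun s => c (toNR s), fun s _ => (c (toNR s)).2, ?_⟩
    rw [Finset.sum_image fun _ _ _ _ h => toNR_injective h]; rfl
  · rintro ⟨c, hc, rfl⟩
    refine Submodule.sum_mem _ fun s hs => ?_
    exact Submodule.smul_mem _ (⟨c s, hc s hs⟩ : {c : ℝ // 0 ≤ c})
      (Submodule.subset_span ⟨s, hs, rfl⟩)

lemma coneDim_coneOf_le_card (S : Finset (Fin d → ℤ)) :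
    coneDim (coneOf (toNR '' (↑S : Set (Fin d → ℤ)))) ≤ S.card := by
  rw [coneDim, span_coneOf, ← Finset.coe_image]
  exact (finrank_span_finset_le_card _).trans Finset.card_image_le

lemma nonneg_of_mem_coneOf {S : Set (NR d)} {u : NR d →ₗ[ℝ] ℝ} (hu : ∀ v ∈ S, 0 ≤ u v)
    {y : NR d} (hy : y ∈ coneOf S) : 0 ≤ u y := by
  rw [coneOf_eq_hull] at hy
  induction hy using Submodule.span_induction with
  | mem v hv => exact hu v hv
  | zero => simp
  | add _ _ _ _ h₁ h₂ => rw [map_add]; exact add_nonneg h₁ h₂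
  | smul c v _ h =>
    change 0 ≤ u ((c : ℝ) • v)
    rw [map_smul, smul_eq_mul]; exact mul_nonneg c.2 h

lemma IsFaceOf.subset {τ σ : Set (NR d)} (h : IsFaceOf τ σ) : τ ⊆ σ := by
  obtain ⟨u, -, rfl⟩ := h
  exact fun _ hz => hz.1

lemma isFaceOf_refl (σ : Set (NR d)) : IsFaceOf σ σ :=
  ⟨0, fun _ _ => le_rfl, by simp⟩

lemma sep_coneOf_apply_eq_zero {S : Finset (Fin d → ℤ)} {u : NR d →ₗ[ℝ] ℝ}
    (hu : ∀ s ∈ S, 0 ≤ u (toNR s)) :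
    {y ∈ coneOf (toNR '' (↑S : Set (Fin d → ℤ))) | u y = 0} =
      coneOf (toNR '' ↑(S.filter fun s => u (toNR s) = 0)) := by
  refine Set.Subset.antisymm ?_ fun y hy => ⟨coneOf_mono (Set.image_mono
    (Finset.coe_subset.2 (Finset.filter_subset _ S))) hy, ?_⟩
  · rintro _ ⟨hy, hy0⟩
    obtain ⟨c, hc, rfl⟩ := mem_coneOf_image.1 hy
    simp only [map_sum, map_smul, smul_eq_mul] at hy0
    have hzero := (Finset.sum_eq_zero_iff_of_nonneg fun s hs =>
      mul_nonneg (hc s hs) (hu s hs)).1 hy0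
    refine mem_coneOf_image.2 ⟨c, fun s hs => hc s (Finset.mem_filter.1 hs).1, ?_⟩
    refine (Finset.sum_filter_of_ne fun s hs hne => ?_).symm
    exact (mul_eq_zero.1 (hzero s hs)).resolve_left fun h => hne (by rw [h, zero_smul])
  · obtain ⟨c, -, rfl⟩ := mem_coneOf_image.1 hy
    simp only [map_sum, map_smul, smul_eq_mul]
    exact Finset.sum_eq_zero fun s hs => by rw [(Finset.mem_filter.1 hs).2, mul_zero]

lemma IsFaceOf.exists_finset_subset {S : Finset (Fin d → ℤ)} {ρ : Set (NR d)}
    (h : IsFaceOf ρ (coneOf (toNR '' (↑S : Set (Fin d → ℤ))))) :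
    ∃ T ⊆ S, ρ = coneOf (toNR '' (↑T : Set (Fin d → ℤ))) := by
  obtain ⟨u, hu, rfl⟩ := h
  exact ⟨_, Finset.filter_subset _ S,
    sep_coneOf_apply_eq_zero fun s hs => hu _ (subset_coneOf _ ⟨s, hs, rfl⟩)⟩

lemma LinearIndepOn.exists_dual_apply_eq {ι K V : Type*} [Field K] [AddCommGroup V]
    [Module K V] {s : Set ι} {v : ι → V} (hli : LinearIndepOn K v s) (g : ι → K) :
    ∃ f : Module.Dual K V, ∀ i ∈ s, f (v i) = g i := by
  classical
  have hli' : LinearIndepOn K id (v '' s) := hli.id_image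
  let b : Module.Basis _ K V := .mk (hli'.linearIndepOn_extend (Set.subset_univ _)) <| by
    simpa using hli'.span_extend_eq_span <| Set.subset_univ _
  refine ⟨b.constr K fun w => if h : ∃ i ∈ s, v i = w then g h.choose else 0, fun i hi => ?_⟩
  have hi' : v i ∈ hli'.extend (Set.subset_univ _) :=
    hli'.subset_extend _ <| Set.mem_image_of_mem v hi
  have hb : b ⟨v i, hi'⟩ = v i := by simp [b]
  have hex : ∃ j ∈ s, v j = v i := ⟨i, hi, rfl⟩
  rw [← hb, Module.Basis.constr_basis, dif_pos hex,
    hli.injOn hex.choose_spec.1 hi hex.choose_spec.2]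

lemma isFaceOf_coneOf_of_subset {S T : Finset (Fin d → ℤ)} (hTS : T ⊆ S)
    (hS : LinearIndepOn ℝ toNR (↑S : Set (Fin d → ℤ))) :
    IsFaceOf (coneOf (toNR '' (↑T : Set (Fin d → ℤ))))
      (coneOf (toNR '' (↑S : Set (Fin d → ℤ)))) := by
  obtain ⟨u, hu⟩ := hS.exists_dual_apply_eq fun s => if s ∈ T then 0 else 1
  have hnonneg : ∀ s ∈ S, 0 ≤ u (toNR s) := fun s hs => by
    rw [hu s hs]; split_ifs <;> norm_num
  refine ⟨u, fun y hy => nonneg_of_mem_coneOf ?_ hy, ?_⟩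
  · rintro _ ⟨s, hs, rfl⟩; exact hnonneg s hs
  · rw [sep_coneOf_apply_eq_zero hnonneg]
    congr 3
    ext s
    rw [Finset.mem_filter]
    refine ⟨fun hs => ⟨hTS hs, by rw [hu s (hTS hs), if_pos hs]⟩, fun ⟨hs, h⟩ => ?_⟩
    by_contra hsT
    rw [hu s hs, if_neg hsT] at h
    exact one_ne_zero h

lemma apply_eq_zero_of_mem_intrinsicInterior {σ : Set (NR d)} (h0 : (0 : NR d) ∈ σ) {x : NR d}
    (hx : x ∈ intrinsicInterior ℝ σ) {u : NR d →ₗ[ℝ] ℝ} (hu : ∀ z ∈ σ, 0 ≤ u z)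
    (hux : u x = 0) {z : NR d} (hz : z ∈ σ) : u z = 0 := by
  obtain ⟨y, hy, rfl⟩ := mem_intrinsicInterior.1 hx
  have hdir : ∀ t : ℝ, -(t • z) ∈ (affineSpan ℝ σ).direction := fun t => by
    have := AffineSubspace.vsub_mem_direction (subset_affineSpan ℝ σ h0)
      (subset_affineSpan ℝ σ hz)
    simpa [vsub_eq_sub, smul_neg] using Submodule.smul_mem _ t this
  -- `x - t • z` stays in `σ` for small `t > 0`, where `u (x - t • z) = - t * u z`
  let f : ℝ → affineSpan ℝ σ := fun t =>
    ⟨-(t • z) +ᵥ (y : NR d), AffineSubspace.vadd_mem_of_mem_direction (hdir t) y.2⟩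
  have hf : Continuous f := by fun_prop
  have hf0 : f 0 = y := Subtype.ext (by simp [f])
  have hnhds : ∀ᶠ t in nhds (0 : ℝ), f t ∈ interior (Subtype.val ⁻¹' σ) :=
    hf.continuousAt.preimage_mem_nhds (hf0 ▸ isOpen_interior.mem_nhds hy)
  obtain ⟨t, hσt, ht⟩ := ((hnhds.filter_mono nhdsWithin_le_nhds).and
    (self_mem_nhdsWithin : Set.Ioi (0 : ℝ) ∈ nhdsWithin 0 (Set.Ioi 0))).exists
  replace hσt := interior_subset hσt
  have := hu _ hσt
  simp only [f, vadd_eq_add, map_add, map_neg, map_smul, hux, smul_eq_mul] at this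
  nlinarith [hu z hz]

lemma subset_of_isFaceOf_inter {σ C : Set (NR d)} (h0 : (0 : NR d) ∈ σ) {x : NR d}
    (hx : x ∈ intrinsicInterior ℝ σ) (hxC : x ∈ C) (hface : IsFaceOf (σ ∩ C) σ) : σ ⊆ C := by
  obtain ⟨u, hu, heq⟩ := hface
  have hux : u x = 0 := (heq ▸ ⟨intrinsicInterior_subset hx, hxC⟩ : x ∈ {z ∈ σ | u z = 0}).2
  intro z hz
  exact (heq ▸ ⟨hz, apply_eq_zero_of_mem_intrinsicInterior h0 hx hu hux hz⟩ :
    z ∈ σ ∩ C).2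

lemma exists_pos_coeffs_of_mem_intrinsicInterior {S : Finset (Fin d → ℤ)}
    (hS : LinearIndepOn ℝ toNR (↑S : Set (Fin d → ℤ))) {v : NR d}
    (hv : v ∈ intrinsicInterior ℝ (coneOf (toNR '' (↑S : Set (Fin d → ℤ))))) :
    ∃ a : (Fin d → ℤ) → ℝ, (∀ s ∈ S, 0 < a s) ∧ v = ∑ s ∈ S, a s • toNR s := by
  obtain ⟨a, ha, rfl⟩ := mem_coneOf_image.1 (intrinsicInterior_subset hv)
  refine ⟨a, fun g hg => (ha g hg).lt_of_ne' fun hag => ?_, rfl⟩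
  obtain ⟨u, hu⟩ := hS.exists_dual_apply_eq fun s => if s = g then 1 else 0
  have hnonneg : ∀ y ∈ coneOf (toNR '' (↑S : Set (Fin d → ℤ))), 0 ≤ u y := by
    refine fun y hy => nonneg_of_mem_coneOf ?_ hy
    rintro _ ⟨s, hs, rfl⟩
    rw [hu s hs]; split_ifs <;> norm_num
  have hv0 : u (∑ s ∈ S, a s • toNR s) = 0 := by
    simp only [map_sum, map_smul, smul_eq_mul]
    rw [Finset.sum_congr rfl fun s hs => by rw [hu s hs], Finset.sum_eq_single_of_mem g hg
      fun s _ hsg => by rw [if_neg hsg, mul_zero], if_pos rfl, hag, zero_mul]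
  have := apply_eq_zero_of_mem_intrinsicInterior (zero_mem_coneOf _) hv hnonneg hv0
    (subset_coneOf _ ⟨g, hg, rfl⟩)
  rw [hu g hg, if_pos rfl] at this
  exact one_ne_zero this

lemma sum_smul_ne_of_pos {S : Finset (Fin d → ℤ)}
    (hS : LinearIndepOn ℝ toNR (↑S : Set (Fin d → ℤ))) (hcard : 2 ≤ S.card)
    {a : (Fin d → ℤ) → ℝ} (ha : ∀ s ∈ S, 0 < a s) {g : Fin d → ℤ} (hg : g ∈ S) :
    ∑ s ∈ S, a s • toNR s ≠ toNR g := by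
  intro h
  obtain ⟨g', hg', hne⟩ := Finset.exists_mem_ne hcard g
  have := linearIndepOn_finset_iffₛ.1 hS a (fun s => if s = g then 1 else 0)
    (by simp only [ite_smul, one_smul, zero_smul, Finset.sum_ite_eq', if_pos hg, h]) g' hg'
  rw [if_neg hne] at this
  exact (ha g' hg').ne' this

lemma linearIndepOn_insert_erase {S G : Finset (Fin d → ℤ)}
    (hS : LinearIndepOn ℝ toNR (↑S : Set (Fin d → ℤ))) (hGS : G ⊆ S) {g₀ : Fin d → ℤ}
    (hg₀ : g₀ ∈ G) {a : (Fin d → ℤ) → ℝ} (ha : a g₀ ≠ 0) {x : Fin d → ℤ}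
    (hx : toNR x = ∑ g ∈ G, a g • toNR g) :
    LinearIndepOn ℝ toNR (↑(insert x (S.erase g₀)) : Set (Fin d → ℤ)) := by
  have hS' : LinearIndepOn ℝ toNR (↑(S.erase g₀) : Set (Fin d → ℤ)) :=
    hS.mono (Finset.coe_subset.2 (Finset.erase_subset _ _))
  have hg₀span : toNR g₀ ∉ Submodule.span ℝ (toNR '' ↑(S.erase g₀)) :=
    hS'.notMem_span_iff.2 ⟨by rwa [← Finset.coe_insert, Finset.insert_erase (hGS hg₀)],
      Finset.notMem_erase _ _⟩
  rw [Finset.coe_insert]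
  refine (hS'.notMem_span_iff.1 fun hxspan => hg₀span ?_).1
  -- `g₀` can be solved for from the expression of `x`, since its coefficient is nonzero
  have hsolve : a g₀ • toNR g₀ = toNR x - ∑ g ∈ G.erase g₀, a g • toNR g := by
    rw [hx, ← Finset.add_sum_erase _ _ hg₀, add_sub_cancel_right]
  rw [← inv_smul_smul₀ ha (toNR g₀), hsolve]
  refine Submodule.smul_mem _ _ (Submodule.sub_mem _ hxspan (Submodule.sum_mem _ fun g hg =>
    Submodule.smul_mem _ _ (Submodule.subset_span ⟨g, ?_, rfl⟩)))
  obtain ⟨hne, hgG⟩ := Finset.mem_erase.1 hg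
  exact Finset.mem_erase.2 ⟨hne, hGS hgG⟩

lemma not_isFaceOf_coneOf_singleton {σ : Set (NR d)} (hσ : 2 ≤ coneDim σ) (v : NR d) :
    ¬ IsFaceOf σ (coneOf {v}) := fun hface => by
  have hle : coneDim σ ≤ 1 := by
    calc coneDim σ ≤ Module.finrank ℝ (Submodule.span ℝ ({v} : Set (NR d))) := by
          rw [coneDim, ← span_coneOf {v}]
          exact Submodule.finrank_mono (Submodule.span_mono hface.subset)
      _ ≤ 1 := (finrank_span_le_card ({v} : Set (NR d))).trans (by simp)
  omega

def primPart (s : Fin d → ℤ) : Fin d → ℤ := fun i => s i / Finset.univ.gcd s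

lemma gcd_smul_primPart (s : Fin d → ℤ) : Finset.univ.gcd s • primPart s = s :=
  funext fun i => Int.mul_ediv_cancel' (Finset.gcd_dvd (Finset.mem_univ i))

lemma gcd_pos_of_ne_zero {s : Fin d → ℤ} (hs : s ≠ 0) : 0 < Finset.univ.gcd s := by
  refine lt_of_le_of_ne (Int.nonneg_of_normalize_eq_self Finset.normalize_gcd) (Ne.symm ?_)
  rw [Ne, Finset.gcd_eq_zero_iff]
  exact fun h => hs (funext fun i => h i (Finset.mem_univ i))

lemma isPrimitive_of_gcd_eq_one {z : Fin d → ℤ} (h : Finset.univ.gcd z = 1) : IsPrimitive z := by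
  refine ⟨fun hz => ?_, fun k y hzy => ?_⟩
  · subst hz
    exact zero_ne_one ((Finset.gcd_eq_zero_iff.2 fun _ _ => rfl).symm.trans h)
  · have hk : k ∣ 1 := h ▸ Finset.dvd_gcd fun i _ => ⟨y i, congrFun hzy i⟩
    exact Int.isUnit_iff.1 (isUnit_of_dvd_one hk)

lemma IsPrimitive.gcd_eq_one {z : Fin d → ℤ} (hz : IsPrimitive z) : Finset.univ.gcd z = 1 :=
  (hz.2 _ _ (gcd_smul_primPart z).symm).resolve_right fun h => by
    linarith [gcd_pos_of_ne_zero hz.1]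

lemma isPrimitive_primPart {s : Fin d → ℤ} (hs : s ≠ 0) : IsPrimitive (primPart s) := by
  have hg := gcd_pos_of_ne_zero hs
  have key : Finset.univ.gcd s = Finset.univ.gcd s * Finset.univ.gcd (primPart s) := by
    conv_lhs => rw [← gcd_smul_primPart s]
    rw [← Int.normalize_of_nonneg hg.le, ← Finset.gcd_mul_left, Int.normalize_of_nonneg hg.le]
    rfl
  exact isPrimitive_of_gcd_eq_one (mul_left_cancel₀ hg.ne' (by rw [mul_one]; exact key.symm))

lemma IsPrimitive.exists_eq_nsmul {z s : Fin d → ℤ} (hz : IsPrimitive z) {c : ℝ} (hc : 0 ≤ c)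
    (hs : toNR s = c • toNR z) : ∃ k : ℕ, s = k • z := by
  obtain ⟨w, hw⟩ := Finset.gcd_eq_sum_mul Finset.univ z
  rw [hz.gcd_eq_one] at hw
  have hcoord : ∀ i, (s i : ℝ) = c * z i := fun i => congrFun hs i
  -- by Bézout, `c = c • ∑ zᵢ wᵢ = ∑ sᵢ wᵢ` is an integer
  set m := ∑ i, s i * w i
  have hcm : c = m := by
    have h1 : ((1 : ℤ) : ℝ) = ∑ i, (z i : ℝ) * w i := by rw [hw]; push_cast; rfl
    simp only [m, Int.cast_sum, Int.cast_mul, hcoord, mul_assoc, ← Finset.mul_sum, ← h1,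
      Int.cast_one, mul_one]
  have hm : 0 ≤ m := by exact_mod_cast hcm ▸ hc
  refine ⟨m.toNat, ?_⟩
  rw [← natCast_zsmul, Int.toNat_of_nonneg hm]
  exact toNR_injective (by rw [hs, toNR_zsmul, hcm])

lemma IsPrimitive.eq_of_eq_smul {z s : Fin d → ℤ} (hz : IsPrimitive z) (hs : IsPrimitive s)
    {c : ℝ} (hc : 0 ≤ c) (he : toNR s = c • toNR z) : s = z := by
  obtain ⟨k, rfl⟩ := hz.exists_eq_nsmul hc he
  rcases hs.2 k z (by rw [natCast_zsmul]) with h | h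
  · rw [← natCast_zsmul, h, one_smul]
  · omega

lemma isPrimitive_of_forall_mem_ray {x : Fin d → ℤ} (hx : x ≠ 0)
    (hgen : ∀ y : Fin d → ℤ, toNR y ∈ coneOf {toNR x} → ∃ k : ℕ, y = k • x) :
    IsPrimitive x := by
  refine ⟨hx, fun k y hxy => ?_⟩
  have hk : k ≠ 0 := by rintro rfl; exact hx (by rw [hxy, zero_smul])
  have hxy' : x = (k.natAbs : ℤ) • (k.sign • y) := by
    rw [smul_smul, mul_comm, Int.sign_mul_natAbs, hxy]
  have hray : toNR (k.sign • y) ∈ coneOf {toNR x} := by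
    refine mem_coneOf_singleton.2 ⟨((k.natAbs : ℤ) : ℝ)⁻¹, by positivity, ?_⟩
    rw [hxy', toNR_zsmul (k.natAbs : ℤ), smul_smul,
      inv_mul_cancel₀ (by exact_mod_cast Int.natAbs_ne_zero.2 hk), one_smul]
  obtain ⟨m, hm⟩ := hgen _ hray
  have hone : ((k.natAbs * m : ℕ) : ℤ) • x = (1 : ℤ) • x := by
    rw [one_smul, natCast_zsmul, mul_smul, ← hm, ← natCast_zsmul, ← hxy']
  have := Nat.eq_one_of_mul_eq_one_right (by exact_mod_cast smul_left_injective ℤ hx hone)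
  exact Int.natAbs_eq_iff.1 this

lemma toNR_primPart {s : Fin d → ℤ} (hs : s ≠ 0) :
    toNR (primPart s) = ((Finset.univ.gcd s : ℤ) : ℝ)⁻¹ • toNR s := by
  have h := congrArg toNR (gcd_smul_primPart s)
  rw [toNR_zsmul] at h
  rw [← h, inv_smul_smul₀ (by exact_mod_cast (gcd_pos_of_ne_zero hs).ne')]

namespace Fan

variable {F : Fan d}

lemma coneGens_coneOf {Q : Finset (Fin d → ℤ)} (hQ : (↑Q : Set (Fin d → ℤ)) ⊆ F.genSet)
    (hmem : coneOf (toNR '' (↑Q : Set (Fin d → ℤ))) ∈ F.cones) :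
    F.coneGens (coneOf (toNR '' (↑Q : Set (Fin d → ℤ)))) = ↑Q := by
  refine Set.Subset.antisymm (fun z hz => ?_) fun q hq => ⟨hQ hq, subset_coneOf _ ⟨q, hq, rfl⟩⟩
  obtain ⟨⟨hzprim, hzray⟩, hzQ⟩ := hz
  -- the ray of `z` is a face of `Cone(Q)`, hence spanned by some elements of `Q`
  have hsub : coneOf {toNR z} ⊆ coneOf (toNR '' (↑Q : Set (Fin d → ℤ))) :=
    coneOf_subset_coneOf (Set.singleton_subset_iff.2 hzQ)
  have hface : IsFaceOf (coneOf {toNR z}) (coneOf (toNR '' (↑Q : Set (Fin d → ℤ)))) := by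
    simpa [Set.inter_eq_self_of_subset_right hsub] using F.inter_face _ hmem _ hzray
  obtain ⟨T, hTQ, hT⟩ := hface.exists_finset_subset
  obtain ⟨c, -, hzc⟩ := mem_coneOf_image.1 (hT ▸ subset_coneOf _ rfl :
    toNR z ∈ coneOf (toNR '' (↑T : Set (Fin d → ℤ))))
  obtain ⟨s, hsT⟩ : T.Nonempty := Finset.nonempty_iff_ne_empty.2 fun hT0 =>
    hzprim.1 (toNR_eq_zero.1 (by simpa [hT0] using hzc))
  obtain ⟨c, hc, hsc⟩ := mem_coneOf_singleton.1 (hT ▸ subset_coneOf _ ⟨s, hsT, rfl⟩ :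
    toNR s ∈ coneOf {toNR z})
  rw [← hzprim.eq_of_eq_smul (hQ (hTQ hsT)).1 hc hsc]
  exact hTQ hsT

lemma IsSimplicial.exists_finset_eq_coneGens (hs : F.IsSimplicial) {ρ : Set (NR d)}
    (hρ : ρ ∈ F.cones) :
    ∃ S : Finset (Fin d → ℤ), (↑S : Set (Fin d → ℤ)) = F.coneGens ρ ∧
      LinearIndepOn ℝ toNR (↑S : Set (Fin d → ℤ)) ∧
      ρ = coneOf (toNR '' (↑S : Set (Fin d → ℤ))) := by
  -- replace the given generators by the primitive vectors on their rays
  obtain ⟨S₀, hLI, rfl⟩ := hs ρ hρ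
  replace hLI : LinearIndepOn ℝ toNR (↑S₀ : Set (Fin d → ℤ)) :=
    (linearIndepOn_iff_image toNR_injective.injOn).2 hLI
  have hne : ∀ s ∈ S₀, s ≠ 0 := fun s hs h0 => hLI.ne_zero hs (by rw [h0, toNR_zero])
  have hgpos : ∀ s ∈ S₀, (0 : ℝ) < (Finset.univ.gcd s : ℤ) := fun s hs => by
    exact_mod_cast gcd_pos_of_ne_zero (hne s hs)
  have hscale : ∀ s ∈ S₀, toNR s = ((Finset.univ.gcd s : ℤ) : ℝ) • toNR (primPart s) :=
    fun s _ => by rw [← toNR_zsmul, gcd_smul_primPart]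
  have hcone : coneOf (toNR '' (↑S₀ : Set (Fin d → ℤ))) =
      coneOf (toNR '' ↑(S₀.image primPart)) := by
    refine (coneOf_subset_coneOf ?_).antisymm (coneOf_subset_coneOf ?_)
    · rintro _ ⟨s, hs, rfl⟩
      rw [hscale s hs]
      exact smul_mem_coneOf (hgpos s hs).le
        (subset_coneOf _ ⟨primPart s, Finset.mem_image_of_mem _ hs, rfl⟩)
    · rintro _ ⟨p, hp, rfl⟩
      obtain ⟨s, hs, rfl⟩ := Finset.mem_image.1 hp
      rw [toNR_primPart (hne s hs)]
      exact smul_mem_coneOf (inv_nonneg.2 (hgpos s hs).le) (subset_coneOf _ ⟨s, hs, rfl⟩)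
  have hgen : (↑(S₀.image primPart) : Set (Fin d → ℤ)) ⊆ F.genSet := by
    intro p hp
    obtain ⟨s, hs, rfl⟩ := Finset.mem_image.1 hp
    refine ⟨isPrimitive_primPart (hne s hs), ?_⟩
    have hface := isFaceOf_coneOf_of_subset (Finset.singleton_subset_iff.2 hs) hLI
    rw [Finset.coe_singleton, Set.image_singleton, hscale s hs,
      coneOf_singleton_smul (hgpos s hs)] at hface
    exact F.face_mem _ hρ _ hface
  have hLI' : LinearIndepOn ℝ (toNR ∘ primPart) (↑S₀ : Set (Fin d → ℤ)) := by
    unfold LinearIndepOn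
    convert hLI.units_smul fun s : (↑S₀ : Set (Fin d → ℤ)) =>
      Units.mk0 _ (inv_ne_zero (hgpos s s.2).ne') using 1
    funext s
    rw [Function.comp_apply, toNR_primPart (hne s s.2)]
    rfl
  refine ⟨S₀.image primPart, ?_, by rw [Finset.coe_image]; exact hLI'.image_of_comp, hcone⟩
  rw [hcone, coneGens_coneOf hgen (hcone ▸ hρ)]

lemma IsSimplicial.eq_coneOf_and_linearIndepOn (hs : F.IsSimplicial) {ρ : Set (NR d)}
    (hρ : ρ ∈ F.cones) {S : Finset (Fin d → ℤ)} (hS : (↑S : Set (Fin d → ℤ)) = F.coneGens ρ) :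
    ρ = coneOf (toNR '' (↑S : Set (Fin d → ℤ))) ∧ LinearIndepOn ℝ toNR (↑S : Set (Fin d → ℤ)) := by
  obtain ⟨S', hS', hLI, rfl⟩ := hs.exists_finset_eq_coneGens hρ
  obtain rfl : S' = S := Finset.coe_injective (hS'.trans hS.symm)
  exact ⟨rfl, hLI⟩

lemma IsSimplicial.linearIndepOn_of_coneOf_mem (hs : F.IsSimplicial) {Q : Finset (Fin d → ℤ)}
    (hQ : (↑Q : Set (Fin d → ℤ)) ⊆ F.genSet)
    (hmem : coneOf (toNR '' (↑Q : Set (Fin d → ℤ))) ∈ F.cones) :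
    LinearIndepOn ℝ toNR (↑Q : Set (Fin d → ℤ)) :=
  (hs.eq_coneOf_and_linearIndepOn hmem (F.coneGens_coneOf hQ hmem).symm).2

variable {σ : Set (NR d)} {x : Fin d → ℤ} {Gσ : Finset (Fin d → ℤ)}

lemma coneOf_mem_starSub_of_subset {τ : Set (NR d)} (hτ : τ ∈ F.cones) (hστ : IsFaceOf σ τ)
    (hGσ : (↑Gσ : Set (Fin d → ℤ)) = F.coneGens σ) {S : Finset (Fin d → ℤ)}
    (hS : (↑S : Set (Fin d → ℤ)) = F.coneGens τ) {g₀ : Fin d → ℤ} (hg₀ : g₀ ∈ Gσ)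
    (hLI : LinearIndepOn ℝ toNR (↑(insert x (S.erase g₀)) : Set (Fin d → ℤ)))
    {T : Finset (Fin d → ℤ)} (hT : T ⊆ insert x (S.erase g₀)) :
    coneOf (toNR '' (↑T : Set (Fin d → ℤ))) ∈ F.starSub σ x := by
  refine Or.inr ⟨τ, hτ, hστ, g₀, hGσ ▸ hg₀, ?_⟩
  have hgens : F.coneGens σ ⊆ F.coneGens τ := fun z hz => ⟨hz.1, hστ.subset hz.2⟩
  rw [Set.sdiff_union_sdiff_cancel hgens (Set.singleton_subset_iff.2 (hGσ ▸ hg₀)), ← hS,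
    ← Finset.coe_erase, ← Finset.coe_insert]
  exact isFaceOf_coneOf_of_subset hT hLI

lemma coneOf_insert_sdiff_notMem_starSub (hs : F.IsSimplicial) (hσ : σ ∈ F.cones)
    (hσeq : σ = coneOf (toNR '' (↑Gσ : Set (Fin d → ℤ))))
    (hGσ : (↑Gσ : Set (Fin d → ℤ)) = F.coneGens σ) (hxσ : toNR x ∈ intrinsicInterior ℝ σ)
    {P : Finset (Fin d → ℤ)} (hP : F.IsPrimitiveCollection P) (hGP : Gσ ⊆ P) :
    coneOf (toNR '' (↑(insert x (P \ Gσ)) : Set (Fin d → ℤ))) ∉ F.starSub σ x := by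
  set C := coneOf (toNR '' (↑(insert x (P \ Gσ)) : Set (Fin d → ℤ)))
  have hxC : toNR x ∈ C := subset_coneOf _ ⟨x, Finset.mem_insert_self _ _, rfl⟩
  have hgenσ : ∀ g ∈ Gσ, toNR g ∈ σ := fun g hg => (hGσ ▸ hg : g ∈ F.coneGens σ).2
  have hPσC : ∀ p ∈ P, toNR p ∈ σ ∨ toNR p ∈ C := fun p hp => by
    by_cases hpG : p ∈ Gσ
    · exact Or.inl (hgenσ p hpG)
    · exact Or.inr (subset_coneOf _
        ⟨p, Finset.mem_insert_of_mem (Finset.mem_sdiff.2 ⟨hp, hpG⟩), rfl⟩)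
  rintro (⟨hCF, -⟩ | ⟨τ, hτ, hστ, g, -, hface⟩)
  · -- `C` meets the relative interior of `σ`, so it contains `σ` and hence equals `Cone(P)`
    have hσC := subset_of_isFaceOf_inter (hσeq ▸ zero_mem_coneOf _) hxσ hxC
      (F.inter_face σ hσ C hCF)
    refine hP.2.2.1 (((coneOf_subset_coneOf ?_).antisymm (coneOf_subset_coneOf ?_)).symm ▸ hCF)
    · rintro _ ⟨p, hp, rfl⟩
      exact (hPσC p hp).elim (fun h => hσC h) id
    · rintro _ ⟨q, hq, rfl⟩
      rcases Finset.mem_insert.1 hq with rfl | hq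
      · exact coneOf_mono (Set.image_mono (Finset.coe_subset.2 hGP))
          (hσeq ▸ intrinsicInterior_subset hxσ)
      · exact subset_coneOf _ ⟨q, (Finset.mem_sdiff.1 hq).1, rfl⟩
  · -- otherwise `C` lies in a cone `τ` of `F` containing `σ`, and `Cone(P)` is a face of `τ`
    obtain ⟨S, hS, hLI, rfl⟩ := hs.exists_finset_eq_coneGens hτ
    have hCτ : C ⊆ coneOf (toNR '' (↑S : Set (Fin d → ℤ))) := by
      refine hface.subset.trans (coneOf_subset_coneOf ?_)
      rintro _ ⟨q, hq, rfl⟩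
      rcases hq with rfl | ⟨hq, -⟩ | ⟨hq, -⟩
      · exact hστ.subset (intrinsicInterior_subset hxσ)
      · exact hq.2
      · exact hστ.subset hq.2
    have hPS : P ⊆ S := fun p hp => by
      rw [← Finset.mem_coe, hS]
      exact ⟨hP.2.1 hp, (hPσC p hp).elim (fun h => hστ.subset h) (fun h => hCτ h)⟩
    exact hP.2.2.1 (F.face_mem _ hτ _ (isFaceOf_coneOf_of_subset hPS hLI))

lemma coneOf_sdiff_mem_starSub (hs : F.IsSimplicial)
    (hGσ : (↑Gσ : Set (Fin d → ℤ)) = F.coneGens σ) {P : Finset (Fin d → ℤ)}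
    (hP : F.IsPrimitiveCollection P) {g₀ : Fin d → ℤ} (hg₀ : g₀ ∈ Gσ) (hGP : Gσ ⊆ P) :
    coneOf (toNR '' (↑(P \ Gσ) : Set (Fin d → ℤ))) ∈ F.starSub σ x := by
  have hQ : (↑(P.erase g₀) : Set (Fin d → ℤ)) ⊆ F.genSet :=
    fun p hp => hP.2.1 (Finset.mem_of_mem_erase hp)
  have hmem : coneOf (toNR '' (↑(P.erase g₀) : Set (Fin d → ℤ))) ∈ F.cones := by
    rw [Finset.coe_erase]; exact hP.2.2.2 g₀ (hGP hg₀)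
  have hface := isFaceOf_coneOf_of_subset
    (fun p hp => Finset.mem_erase.2 ⟨fun h => (Finset.mem_sdiff.1 hp).2 (h ▸ hg₀),
      (Finset.mem_sdiff.1 hp).1⟩ : P \ Gσ ⊆ P.erase g₀)
    (hs.linearIndepOn_of_coneOf_mem hQ hmem)
  refine Or.inl ⟨F.face_mem _ hmem _ hface, fun hσface => ?_⟩
  -- `g₀ ∈ σ` would then be a ray generator of `Cone(P ∖ {g₀})`
  have hg₀σ : g₀ ∈ F.coneGens σ := hGσ ▸ hg₀
  have : g₀ ∈ F.coneGens (coneOf (toNR '' (↑(P.erase g₀) : Set (Fin d → ℤ)))) :=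
    ⟨hg₀σ.1, hface.subset (hσface.subset hg₀σ.2)⟩
  rw [F.coneGens_coneOf hQ hmem] at this
  exact Finset.notMem_erase g₀ P this

lemma coneOf_insert_sdiff_erase_mem_starSub (hs : F.IsSimplicial)
    (hσeq : σ = coneOf (toNR '' (↑Gσ : Set (Fin d → ℤ))))
    (hGσ : (↑Gσ : Set (Fin d → ℤ)) = F.coneGens σ) {a : (Fin d → ℤ) → ℝ}
    (ha : ∀ g ∈ Gσ, 0 < a g) (hxa : toNR x = ∑ g ∈ Gσ, a g • toNR g)
    {P : Finset (Fin d → ℤ)} (hP : F.IsPrimitiveCollection P) {g₀ : Fin d → ℤ} (hg₀ : g₀ ∈ Gσ)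
    (hGP : Gσ ⊆ P) {y : Fin d → ℤ} (hy : y ∈ P \ Gσ) :
    coneOf (toNR '' (↑(insert x ((P \ Gσ).erase y)) : Set (Fin d → ℤ))) ∈ F.starSub σ x := by
  obtain ⟨hyP, hyG⟩ := Finset.mem_sdiff.1 hy
  have hQ : (↑(P.erase y) : Set (Fin d → ℤ)) ⊆ F.genSet :=
    fun p hp => hP.2.1 (Finset.mem_of_mem_erase hp)
  have hmem : coneOf (toNR '' (↑(P.erase y) : Set (Fin d → ℤ))) ∈ F.cones := by
    rw [Finset.coe_erase]; exact hP.2.2.2 y hyP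
  have hLI := hs.linearIndepOn_of_coneOf_mem hQ hmem
  have hGPy : Gσ ⊆ P.erase y := fun g hg => Finset.mem_erase.2 ⟨fun h => hyG (h ▸ hg), hGP hg⟩
  refine coneOf_mem_starSub_of_subset hmem (hσeq ▸ isFaceOf_coneOf_of_subset hGPy hLI) hGσ
    (F.coneGens_coneOf hQ hmem).symm hg₀
    (linearIndepOn_insert_erase hLI hGPy hg₀ (ha g₀ hg₀).ne' hxa)
    (Finset.insert_subset_insert _ fun p hp => ?_)
  obtain ⟨hpy, hpPG⟩ := Finset.mem_erase.1 hp
  obtain ⟨hpP, hpG⟩ := Finset.mem_sdiff.1 hpPG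
  exact Finset.mem_erase.2 ⟨fun h => hpG (h ▸ hg₀), Finset.mem_erase.2 ⟨hpy, hpP⟩⟩

end Fan

end StarSubdivision

theorem primitiveCollection_starSubdivision_of_superset_general {d : ℕ} (F F' : Fan d)
    (hs : F.IsSimplicial)
    (σ : Set (NR d)) (hσ : σ ∈ F.cones) (hdim : 2 ≤ coneDim σ)
    (x : Fin d → ℤ) (hxσ : toNR x ∈ intrinsicInterior ℝ σ)
    (hgen : ∀ y : Fin d → ℤ, toNR y ∈ coneOf {toNR x} → ∃ k : ℕ, y = k • x)
    (Gσ : Finset (Fin d → ℤ)) (hGσ : (↑Gσ : Set (Fin d → ℤ)) = F.coneGens σ)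
    (hsub : F'.IsStarSubdivisionOf F σ x) :
    ∀ P : Finset (Fin d → ℤ), F.IsPrimitiveCollection P → Gσ ⊆ P →
      F'.IsPrimitiveCollection (insert x (P \ Gσ)) := by
  intro P hP hGP
  obtain ⟨hσeq, hGLI⟩ := hs.eq_coneOf_and_linearIndepOn hσ hGσ
  obtain ⟨a, ha, hxa⟩ := exists_pos_coeffs_of_mem_intrinsicInterior hGLI (hσeq ▸ hxσ)
  have hcard : 2 ≤ Gσ.card := hdim.trans (hσeq ▸ coneDim_coneOf_le_card Gσ)
  obtain ⟨g₀, hg₀⟩ := (Finset.card_pos (s := Gσ)).1 (by omega)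
  have hx0 : x ≠ 0 := fun h => (ha g₀ hg₀).ne'
    (linearIndepOn_finset_iff.1 hGLI a (by rw [← hxa, h, toNR_zero]) g₀ hg₀)
  have hxP : x ∉ P := fun h => sum_smul_ne_of_pos hGLI hcard ha
    (by rw [← Finset.mem_coe, hGσ]; exact ⟨hP.2.1 h, intrinsicInterior_subset hxσ⟩) hxa.symm
  have hxray : coneOf {toNR x} ∈ F.starSub σ x := by
    simpa using Fan.coneOf_mem_starSub_of_subset hσ (isFaceOf_refl σ) hGσ hGσ hg₀
      (linearIndepOn_insert_erase hGLI subset_rfl hg₀ (ha g₀ hg₀).ne' hxa)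
      (Finset.singleton_subset_iff.2 (Finset.mem_insert_self x _))
  rw [Fan.IsStarSubdivisionOf] at hsub
  refine ⟨Finset.insert_nonempty _ _, ?_,
    hsub ▸ Fan.coneOf_insert_sdiff_notMem_starSub hs hσ hσeq hGσ hxσ hP hGP, fun z hz => ?_⟩
  · rw [Finset.coe_insert]
    refine Set.insert_subset ⟨isPrimitive_of_forall_mem_ray hx0 hgen, hsub ▸ hxray⟩ fun p hp => ?_
    have hpF := hP.2.1 (Finset.mem_sdiff.1 hp).1
    exact ⟨hpF.1, hsub ▸ Or.inl ⟨hpF.2, not_isFaceOf_coneOf_singleton hdim _⟩⟩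
  · rw [← Finset.coe_erase, hsub]
    rcases Finset.mem_insert.1 hz with rfl | hz
    · rw [Finset.erase_insert fun h => hxP (Finset.mem_sdiff.1 h).1]
      exact Fan.coneOf_sdiff_mem_starSub hs hGσ hP hg₀ hGP
    · rw [Finset.erase_insert_of_ne fun h => hxP (by rw [h]; exact (Finset.mem_sdiff.1 hz).1)]
      exact Fan.coneOf_insert_sdiff_erase_mem_starSub hs hσeq hGσ ha hxa hP hg₀ hGP hz

/-- If `P` is a primitive collection of `Σ` containing `G(σ)`, then
`(P ∖ G(σ)) ∪ {x}` is a primitive collection of the star subdivision. -/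
theorem primitiveCollection_starSubdivision_of_superset {d : ℕ} (F F' : Fan d)
    (hc : F.IsComplete) (hs : F.IsSimplicial)
    (σ : Set (NR d)) (hσ : σ ∈ F.cones) (hdim : 2 ≤ coneDim σ)
    (x : Fin d → ℤ) (hxσ : toNR x ∈ intrinsicInterior ℝ σ)
    (hgen : ∀ y : Fin d → ℤ, toNR y ∈ coneOf {toNR x} → ∃ k : ℕ, y = k • x)
    (Gσ : Finset (Fin d → ℤ)) (hGσ : (↑Gσ : Set (Fin d → ℤ)) = F.coneGens σ)
    (hsub : F'.IsStarSubdivisionOf F σ x) :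
    ∀ P : Finset (Fin d → ℤ), F.IsPrimitiveCollection P → Gσ ⊆ P →
      F'.IsPrimitiveCollection (insert x (P \ Gσ)) :=
  primitiveCollection_starSubdivision_of_superset_general F F' hs σ hσ hdim x hxσ hgen Gσ hGσ hsub
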